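/- arXiv:1110.6858 — 4 statements merged into one kernel-verified Lean document; each statement's English description precedes it below -/
import Mathlib

section
/- Let A be a C*-algebra, d : A → A a derivation (a continuous linear map satisfying d(xy) = d(x)y + x d(y) for all x, y ∈ A), and I a closed two-sided ideal of A. Then d(I) ⊆ I; that is, every derivation of a C*-algebra leaves every closed two-sided ideal invariant. -/
/-!
If `x ∈ I`, then `x` is a limit of elements `x * e` with `e ∈ I`: with `a = x⋆x ∈ I` and
`e = a (a² + ε²)⁻¹ a`, the C⋆-identity gives
`‖x - x e‖² = ‖(1 - e) a (1 - e)‖ ≤ sup_t |t| ε⁴ / (t² + ε²)² ≤ ε / 2`.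
By the Leibniz rule `d (x e) = d x · e + x · d e ∈ I`, so `d x ∈ I` by continuity of `d` and
closedness of `I`.
-/

lemma abs_mul_one_sub_sq_div_sq_add_sq_sq_le {ε : ℝ} (hε : 0 < ε) (t : ℝ) :
    |t * (1 - t ^ 2 / (t ^ 2 + ε ^ 2)) ^ 2| ≤ ε / 2 := by
  set D := t ^ 2 + ε ^ 2
  have hD : 0 < D := by positivity
  have hamgm : 2 * |t| * ε ≤ D := by nlinarith [sq_nonneg (|t| - ε), sq_abs t]
  rw [one_sub_div hD.ne', add_sub_cancel_left, abs_mul, abs_pow, abs_div, abs_of_pos hD,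
    abs_of_pos (by positivity : 0 < ε ^ 2), div_pow, mul_div_assoc',
    div_le_div_iff₀ (by positivity) two_pos]
  calc |t| * (ε ^ 2) ^ 2 * 2 = ε ^ 3 * (2 * |t| * ε) := by ring
    _ ≤ ε ^ 3 * D := by gcongr
    _ ≤ ε * D ^ 2 := by nlinarith [sq_nonneg t, mul_pos hε hD]

section CStarAlgebra

variable {A : Type*} [NonUnitalCStarAlgebra A]

lemma star_sub_mul_cfcₙ_mul_sub_mul_cfcₙ (x : A) {g : ℝ → ℝ} (hg : Continuous g)
    (hg0 : g 0 = 0) :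
    star (x - x * cfcₙ g (star x * x)) * (x - x * cfcₙ g (star x * x)) =
      cfcₙ (fun t ↦ t * (1 - g t) ^ 2) (star x * x) := by
  set a := star x * x
  set e := cfcₙ g a
  have he : star e = e := (cfcₙ_predicate g a).star_eq
  calc star (x - x * e) * (x - x * e) = a - a * e - (e * a - e * (a * e)) := by
        rw [star_sub, star_mul, he, sub_mul, mul_sub, mul_sub]
        simp only [a, mul_assoc]
    _ = cfcₙ (fun t ↦ t - t * g t - (g t * t - g t * (t * g t))) a := by
        rw [cfcₙ_sub .., cfcₙ_sub .., cfcₙ_sub .., cfcₙ_mul .., cfcₙ_mul .., cfcₙ_mul ..,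
          cfcₙ_mul .., cfcₙ_id' ℝ a]
    _ = cfcₙ (fun t ↦ t * (1 - g t) ^ 2) a := by congr 1; funext t; ring

lemma norm_sub_mul_cfcₙ_sq_le (x : A) {g : ℝ → ℝ} (hg : Continuous g) (hg0 : g 0 = 0)
    {c : ℝ} (h : ∀ t, |t * (1 - g t) ^ 2| ≤ c) :
    ‖x - x * cfcₙ g (star x * x)‖ ^ 2 ≤ c := by
  rw [sq, ← CStarRing.norm_star_mul_self, star_sub_mul_cfcₙ_mul_sub_mul_cfcₙ x hg hg0]
  exact norm_cfcₙ_le fun t _ ↦ h t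

lemma cfcₙ_sq_div_sq_add_sq_eq_mul {a : A} (ha : IsSelfAdjoint a) {ε : ℝ} (hε : 0 < ε) :
    cfcₙ (fun t ↦ t ^ 2 / (t ^ 2 + ε ^ 2)) a = a * cfcₙ (fun t ↦ t / (t ^ 2 + ε ^ 2)) a := by
  have hcont : Continuous fun t : ℝ ↦ t / (t ^ 2 + ε ^ 2) :=
    continuous_id.div (by fun_prop) fun t ↦ by positivity
  calc cfcₙ (fun t ↦ t ^ 2 / (t ^ 2 + ε ^ 2)) a
      = cfcₙ (fun t ↦ t * (t / (t ^ 2 + ε ^ 2))) a := by congr 1; funext t; ring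
    _ = a * cfcₙ (fun t ↦ t / (t ^ 2 + ε ^ 2)) a := by
        rw [cfcₙ_mul (fun t ↦ t) _ a (hg := hcont.continuousOn), cfcₙ_id' ℝ a]

lemma mem_closure_range_mul_star_mul_self_mul (x : A) :
    x ∈ closure (Set.range fun b : A ↦ x * (star x * x * b)) := by
  rw [Metric.mem_closure_iff]
  intro δ hδ
  have hε : 0 < δ ^ 2 := by positivity
  have hg : Continuous fun t : ℝ ↦ t ^ 2 / (t ^ 2 + (δ ^ 2) ^ 2) :=
    (continuous_pow 2).div (by fun_prop) fun t ↦ by positivity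
  have hbound := norm_sub_mul_cfcₙ_sq_le x hg (by simp)
    (abs_mul_one_sub_sq_div_sq_add_sq_sq_le hε)
  rw [cfcₙ_sq_div_sq_add_sq_eq_mul (.star_mul_self x) hε] at hbound
  refine ⟨_, ⟨cfcₙ (fun t ↦ t / (t ^ 2 + (δ ^ 2) ^ 2)) (star x * x), rfl⟩, ?_⟩
  rw [dist_eq_norm]
  exact lt_of_pow_lt_pow_left₀ 2 hδ.le (by linarith)

end CStarAlgebra

/-- Every derivation (continuous linear map satisfying the Leibniz rule) of a C*-algebra leaves
every closed two-sided ideal invariant. -/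
theorem derivation_maps_closed_ideal_into_itself
    {A : Type*} [NonUnitalCStarAlgebra A] (d : A →L[ℂ] A)
    (hd : ∀ x y : A, d (x * y) = d x * y + x * d y)
    (I : TwoSidedIdeal A) (hI : IsClosed (I : Set A)) :
    ∀ x ∈ I, d x ∈ I := by
  intro x hx
  have hrange : Set.range (fun b : A ↦ x * (star x * x * b)) ⊆ d ⁻¹' I := by
    rintro _ ⟨b, rfl⟩
    have he : star x * x * b ∈ I := I.mul_mem_right _ _ (I.mul_mem_left _ _ hx)
    rw [Set.mem_preimage, hd]
    exact I.add_mem (I.mul_mem_left _ _ he) (I.mul_mem_right _ _ hx)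
  exact (hI.preimage d.continuous).closure_subset_iff.mpr hrange
    (mem_closure_range_mul_star_mul_self_mul x)
end

section
/- Let A be a C*-algebra and d : A → A a derivation. Then there exists a unique derivation D : M(A) → M(A) of the multiplier algebra M(A) of A such that D(ι(a)) = ι(d(a)) for all a ∈ A, where ι : A → M(A) is the canonical embedding of A into its multiplier algebra. -/
/-!
Multipliers act on `A` by the pair of centralizers `(L, R)`, and `d` extends by the commutator
`m ↦ ([d, L], [d, R])`; the Leibniz rule for `d` is exactly what keeps this pair a double
centralizer, and it makes the extension a derivation agreeing with `d` on `A`. For uniqueness,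
`A` is an essential ideal of `𝓜(ℂ, A)` (the C*-identity `‖x⋆x‖ = ‖x‖²` rules out annihilators),
and any derivation `D` of `𝓜(ℂ, A)` satisfies `D m * a = D (m * a) - m * D a` with `m * a ∈ A`.
-/

open scoped MultiplierAlgebra

theorem norm_mul_sub_mul_le {R : Type*} [NonUnitalSeminormedRing R] (a b : R) :
    ‖a * b - b * a‖ ≤ 2 * ‖a‖ * ‖b‖ :=
  calc ‖a * b - b * a‖ ≤ ‖a * b‖ + ‖b * a‖ := norm_sub_le _ _
    _ ≤ ‖a‖ * ‖b‖ + ‖b‖ * ‖a‖ := add_le_add (norm_mul_le _ _) (norm_mul_le _ _)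
    _ = 2 * ‖a‖ * ‖b‖ := by ring

namespace CStarRing

variable {A : Type*} [NonUnitalNormedRing A] [StarRing A] [CStarRing A]

theorem eq_zero_of_forall_mul_eq_zero_left {z : A} (h : ∀ c, c * z = 0) : z = 0 :=
  (star_mul_self_eq_zero_iff z).mp (h (star z))

theorem eq_zero_of_forall_mul_eq_zero_right {z : A} (h : ∀ c, z * c = 0) : z = 0 :=
  (mul_star_self_eq_zero_iff z).mp (h (star z))

end CStarRing

namespace DoubleCentralizer

variable {𝕜 A : Type*} [NontriviallyNormedField 𝕜] [NonUnitalNormedRing A] [NormedSpace 𝕜 A]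
  [SMulCommClass 𝕜 A A] [IsScalarTower 𝕜 A A]

section Derivation

variable (d : A →L[𝕜] A) (hd : ∀ x y : A, d (x * y) = d x * y + x * d y)

noncomputable def bracket (m : 𝓜(𝕜, A)) : 𝓜(𝕜, A) where
  fst := d * m.fst - m.fst * d
  snd := d * m.snd - m.snd * d
  central x y := by
    have h := congrArg d (m.central x y)
    rw [hd, hd, m.central x (d y), ← m.central (d x) y] at h
    simp only [sub_apply, mul_apply_eq_comp, sub_mul, mul_sub]
    rw [sub_eq_sub_iff_add_eq_add, h, add_comm]

@[simp]
theorem bracket_fst (m : 𝓜(𝕜, A)) : (bracket d hd m).fst = d * m.fst - m.fst * d := rfl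

@[simp]
theorem bracket_snd (m : 𝓜(𝕜, A)) : (bracket d hd m).snd = d * m.snd - m.snd * d := rfl

theorem norm_bracket_le (m : 𝓜(𝕜, A)) : ‖bracket d hd m‖ ≤ 2 * ‖d‖ * ‖m‖ := by
  simp only [norm_def, toProdHom_apply, Prod.norm_def, bracket_fst, bracket_snd]
  rw [mul_max_of_nonneg _ _ (by positivity)]
  exact max_le_max (norm_mul_sub_mul_le _ _) (norm_mul_sub_mul_le _ _)

noncomputable def extendDerivation : 𝓜(𝕜, A) →L[𝕜] 𝓜(𝕜, A) :=
  LinearMap.mkContinuous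
    { toFun := bracket d hd
      map_add' x y := by
        ext1; apply Prod.ext <;> simp only [bracket_fst, bracket_snd, add_fst, add_snd] <;>
          noncomm_ring
      map_smul' c x := by ext1; apply Prod.ext <;> simp [smul_sub] }
    (2 * ‖d‖) (norm_bracket_le d hd)

theorem extendDerivation_apply (m : 𝓜(𝕜, A)) : extendDerivation d hd m = bracket d hd m := rfl

theorem extendDerivation_mul (x y : 𝓜(𝕜, A)) :
    extendDerivation d hd (x * y) = extendDerivation d hd x * y + x * extendDerivation d hd y := by
  ext1; apply Prod.ext <;>
    simp only [extendDerivation_apply, bracket_fst, bracket_snd, mul_fst, mul_snd, add_fst,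
      add_snd] <;>
    noncomm_ring

theorem extendDerivation_coe (a : A) : extendDerivation d hd a = (d a : 𝓜(𝕜, A)) := by
  ext1; apply Prod.ext <;> ext b <;> simp [extendDerivation_apply, hd]

end Derivation

section CStarRing

variable [StarRing A] [CStarRing A]

theorem fst_mul (m : 𝓜(𝕜, A)) (a b : A) : m.fst (a * b) = m.fst a * b :=
  sub_eq_zero.mp <| CStarRing.eq_zero_of_forall_mul_eq_zero_left fun c => by
    rw [mul_sub, ← m.central, ← mul_assoc, ← mul_assoc, ← m.central, sub_self]

theorem mul_coe (m : 𝓜(𝕜, A)) (a : A) : m * (a : 𝓜(𝕜, A)) = (m.fst a : 𝓜(𝕜, A)) := by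
  ext1; apply Prod.ext <;> ext b
  · simp [mul_fst, fst_mul]
  · simp [mul_snd, m.central]

theorem eq_zero_of_forall_mul_coe_eq_zero {z : 𝓜(𝕜, A)} (h : ∀ a : A, z * a = 0) : z = 0 := by
  have hfst : ∀ a, z.fst a = 0 := fun a => CStarRing.eq_zero_of_forall_mul_eq_zero_right fun b => by
    simpa [mul_coe] using congrArg (fun w : 𝓜(𝕜, A) => w.fst b) (h a)
  ext1; apply Prod.ext <;> ext b
  · simp [hfst]
  · exact CStarRing.eq_zero_of_forall_mul_eq_zero_right fun c => by rw [z.central, hfst, mul_zero]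

theorem eq_of_forall_mul_coe_eq {x y : 𝓜(𝕜, A)} (h : ∀ a : A, x * a = y * a) : x = y :=
  sub_eq_zero.mp <| eq_zero_of_forall_mul_coe_eq_zero fun a => by rw [sub_mul, h, sub_self]

/-- `D m * a = D (m * a) - m * D a`, and `m * a` lies in `A`. -/
theorem leibniz_ext {D₁ D₂ : 𝓜(𝕜, A) → 𝓜(𝕜, A)}
    (h₁ : ∀ x y, D₁ (x * y) = D₁ x * y + x * D₁ y) (h₂ : ∀ x y, D₂ (x * y) = D₂ x * y + x * D₂ y)
    (h : ∀ a : A, D₁ a = D₂ a) : D₁ = D₂ :=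
  funext fun m => eq_of_forall_mul_coe_eq fun a => by
    have := h₁ m a
    rw [mul_coe, h, ← mul_coe, h₂, h] at this
    exact (add_right_cancel this).symm

end CStarRing

end DoubleCentralizer

open DoubleCentralizer

/-- Every derivation `d` of a C*-algebra `A` extends uniquely to a derivation `D` of the
multiplier algebra `𝓜(ℂ, A)`, in the sense that `D (ι a) = ι (d a)` for all `a ∈ A`, where
`ι : A → 𝓜(ℂ, A)` is the canonical embedding of `A` into its multiplier algebra. -/
theorem derivation_extends_uniquely_to_multiplier_algebra
    {A : Type*} [NonUnitalCStarAlgebra A] (d : A →L[ℂ] A)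
    (hd : ∀ x y : A, d (x * y) = d x * y + x * d y) :
    ∃! D : 𝓜(ℂ, A) →L[ℂ] 𝓜(ℂ, A),
      (∀ x y : 𝓜(ℂ, A), D (x * y) = D x * y + x * D y) ∧
      ∀ a : A, D ((a : 𝓜(ℂ, A))) = ((d a : A) : 𝓜(ℂ, A)) := by
  refine ⟨extendDerivation d hd, ⟨extendDerivation_mul d hd, extendDerivation_coe d hd⟩, ?_⟩
  rintro D ⟨hD_mul, hD_coe⟩
  refine DFunLike.coe_injective (leibniz_ext hD_mul (extendDerivation_mul d hd) fun a => ?_)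
  rw [hD_coe, extendDerivation_coe]
end

section
/- Let B be a simple C*-algebra whose center Z(B) = {z ∈ B : zb = bz for all b ∈ B} is nonzero. Then B is unital. -/
/-!
If `z` is central and nonzero, so is the self-adjoint element `w = star z * z`, and so is every
`cfcₙ f w`. In a simple C*-algebra the right annihilator of a nonzero central element is a proper
closed ideal, hence zero: nonzero central elements are not zero divisors. Tent functions around two
distinct nonzero points of the quasispectrum of `w` would give two nonzero central elements with
zero product, so the quasispectrum of `w` is `{0, t}` with `t ≠ 0`. Then `w * w = t • w`, and
`t⁻¹ • w` is a central idempotent that is not a zero divisor, which forces it to be the identity.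
-/

noncomputable def tent {X : Type*} [PseudoMetricSpace X] (s : X) (δ : ℝ) (x : X) : ℝ :=
  max 0 (δ - dist x s)

section Tent

variable {X : Type*} [PseudoMetricSpace X]

lemma continuous_tent (s : X) (δ : ℝ) : Continuous (tent s δ) :=
  continuous_const.max (continuous_const.sub (continuous_id.dist continuous_const))

lemma tent_self (s : X) {δ : ℝ} (hδ : 0 ≤ δ) : tent s δ s = δ := by
  simp [tent, hδ]

lemma tent_eq_zero_of_le_dist {s x : X} {δ : ℝ} (h : δ ≤ dist x s) : tent s δ x = 0 :=
  max_eq_left (sub_nonpos.mpr h)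

lemma tent_mul_tent_eq_zero {s t : X} {δ : ℝ} (h : 2 * δ ≤ dist s t) (x : X) :
    tent s δ x * tent t δ x = 0 := by
  by_cases hs : δ ≤ dist x s
  · rw [tent_eq_zero_of_le_dist hs, zero_mul]
  · have ht : δ ≤ dist x t := by linarith [dist_triangle_left s t x]
    rw [tent_eq_zero_of_le_dist ht, mul_zero]

end Tent

lemma exists_continuous_mul_eq_zero_ne_zero {X : Type*} [MetricSpace X] {x₀ s t : X}
    (hs : s ≠ x₀) (ht : t ≠ x₀) (hst : s ≠ t) :
    ∃ f g : X → ℝ, Continuous f ∧ Continuous g ∧ f x₀ = 0 ∧ g x₀ = 0 ∧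
      f s ≠ 0 ∧ g t ≠ 0 ∧ ∀ x, f x * g x = 0 := by
  set δ := min (dist s t / 2) (min (dist x₀ s) (dist x₀ t))
  have hδ : 0 < δ := lt_min (half_pos (dist_pos.mpr hst))
    (lt_min (dist_pos.mpr hs.symm) (dist_pos.mpr ht.symm))
  refine ⟨tent s δ, tent t δ, continuous_tent s δ, continuous_tent t δ,
    tent_eq_zero_of_le_dist ((min_le_right _ _).trans (min_le_left _ _)),
    tent_eq_zero_of_le_dist ((min_le_right _ _).trans (min_le_right _ _)),
    by rw [tent_self s hδ.le]; exact hδ.ne', by rw [tent_self t hδ.le]; exact hδ.ne',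
    tent_mul_tent_eq_zero ?_⟩
  linarith [min_le_left (dist s t / 2) (min (dist x₀ s) (dist x₀ t))]

namespace TwoSidedIdeal

variable {R : Type*} [NonUnitalRing R]

def annihilatorOfCentral (c : R) (hc : ∀ b, Commute c b) : TwoSidedIdeal R :=
  mk' {x | c * x = 0} (mul_zero c)
    (fun {x y} (hx : c * x = 0) (hy : c * y = 0) ↦ show c * (x + y) = 0 by
      rw [mul_add, hx, hy, add_zero])
    (fun {x} (hx : c * x = 0) ↦ show c * -x = 0 by rw [mul_neg, hx, neg_zero])
    (fun {x y} (hy : c * y = 0) ↦ show c * (x * y) = 0 by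
      rw [← mul_assoc, (hc x).eq, mul_assoc, hy, mul_zero])
    (fun {x y} (hx : c * x = 0) ↦ show c * (x * y) = 0 by rw [← mul_assoc, hx, zero_mul])

@[simp]
lemma mem_annihilatorOfCentral {c : R} (hc : ∀ b, Commute c b) {x : R} :
    x ∈ annihilatorOfCentral c hc ↔ c * x = 0 :=
  mem_mk' ..

lemma isClosed_annihilatorOfCentral [TopologicalSpace R] [ContinuousMul R] [T1Space R] {c : R}
    (hc : ∀ b, Commute c b) : IsClosed (annihilatorOfCentral c hc : Set R) := by
  have : (annihilatorOfCentral c hc : Set R) = (c * ·) ⁻¹' {0} := by ext; simp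
  exact this ▸ isClosed_singleton.preimage (continuous_const_mul c)

end TwoSidedIdeal

lemma IsIdempotentElem.mul_left_eq_self {R : Type*} [NonUnitalRing R] {e : R}
    (he : IsIdempotentElem e) (hcancel : ∀ x, e * x = 0 → x = 0) (b : R) : e * b = b := by
  have : e * (b - e * b) = 0 := by rw [mul_sub, ← mul_assoc, he.eq, sub_self]
  exact (sub_eq_zero.mp (hcancel _ this)).symm

section SimpleCStarAlgebra

variable {A : Type*} [NonUnitalCStarAlgebra A]

lemma eq_zero_of_central_mul_eq_zero
    (hsimple : ∀ I : TwoSidedIdeal A, IsClosed (I : Set A) → I = ⊥ ∨ I = ⊤)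
    {c x : A} (hc : ∀ b, Commute c b) (hc0 : c ≠ 0) (hx : c * x = 0) : x = 0 := by
  rcases hsimple _ (TwoSidedIdeal.isClosed_annihilatorOfCentral hc) with h | h
  · simpa [h] using (TwoSidedIdeal.mem_annihilatorOfCentral hc).mpr hx
  · have : c * star c = 0 := by
      simpa [h] using (TwoSidedIdeal.mem_annihilatorOfCentral hc (x := star c))
    exact absurd (CStarRing.mul_star_self_eq_zero_iff c |>.mp this) hc0

lemma cfcₙ_ne_zero {a : A} {f : ℝ → ℝ} {s : ℝ} (hs : s ∈ quasispectrum ℝ a) (hfs : f s ≠ 0)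
    (hf : Continuous f := by fun_prop) (hf0 : f 0 = 0 := by cfc_zero_tac)
    (ha : IsSelfAdjoint a := by cfc_tac) : cfcₙ f a ≠ 0 := by
  intro h
  have : f s ∈ quasispectrum ℝ (cfcₙ f a) := by
    rw [cfcₙ_map_quasispectrum f a]; exact ⟨s, hs, rfl⟩
  rw [h, CFC.quasispectrum_zero_eq] at this
  exact hfs this

lemma quasispectrum_diff_zero_subsingleton_of_central
    (hsimple : ∀ I : TwoSidedIdeal A, IsClosed (I : Set A) → I = ⊥ ∨ I = ⊤)
    {w : A} (hw : IsSelfAdjoint w) (hwc : ∀ b, Commute w b) :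
    (quasispectrum ℝ w \ {0}).Subsingleton := by
  rintro s ⟨hs, hs0⟩ t ⟨ht, ht0⟩
  by_contra hst
  obtain ⟨f, g, hf, hg, hf0, hg0, hfs, hgt, hfg⟩ :=
    exists_continuous_mul_eq_zero_ne_zero hs0 ht0 hst
  have hprod : cfcₙ g w * cfcₙ f w = 0 := by
    rw [← cfcₙ_mul g f w]
    simp_rw [mul_comm (g _), hfg]
    exact cfcₙ_zero ℝ w
  exact cfcₙ_ne_zero hs hfs hf hf0 hw <| eq_zero_of_central_mul_eq_zero hsimple
    (fun b ↦ (hwc b).cfcₙ_real g) (cfcₙ_ne_zero ht hgt hg hg0 hw) hprod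

lemma IsSelfAdjoint.mul_self_eq_smul {w : A} (hw : IsSelfAdjoint w) {t : ℝ}
    (h : quasispectrum ℝ w ⊆ {0, t}) : w * w = t • w := by
  have hcongr : (quasispectrum ℝ w).EqOn (fun x ↦ x * x) (fun x ↦ t • x) := by
    intro x hx
    rcases h hx with rfl | rfl <;> simp
  calc w * w = cfcₙ (fun x : ℝ ↦ x * x) w := by
        rw [cfcₙ_mul (fun x : ℝ ↦ x) (fun x : ℝ ↦ x) w, cfcₙ_id' ℝ w]
    _ = cfcₙ (fun x : ℝ ↦ t • x) w := cfcₙ_congr hcongr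
    _ = t • w := cfcₙ_smul_id t w

lemma exists_mul_self_eq_smul_of_central
    (hsimple : ∀ I : TwoSidedIdeal A, IsClosed (I : Set A) → I = ⊥ ∨ I = ⊤)
    {w : A} (hw : IsSelfAdjoint w) (hwc : ∀ b, Commute w b) (hw0 : w ≠ 0) :
    ∃ t : ℝ, t ≠ 0 ∧ w * w = t • w := by
  obtain ⟨t, ht, ht0⟩ : ∃ t ∈ quasispectrum ℝ w, t ≠ 0 := by
    by_contra! h
    exact hw0 (CFC.eq_zero_of_quasispectrum_eq_zero (R := ℝ) w h)
  refine ⟨t, ht0, hw.mul_self_eq_smul fun s hs ↦ ?_⟩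
  by_cases hs0 : s = 0
  · exact .inl hs0
  · exact .inr <|
      quasispectrum_diff_zero_subsingleton_of_central hsimple hw hwc ⟨hs, hs0⟩ ⟨ht, ht0⟩

end SimpleCStarAlgebra

theorem simple_with_nonzero_center_unital_general
    {B : Type*} [NonUnitalCStarAlgebra B]
    (hsimple : ∀ I : TwoSidedIdeal B, IsClosed (I : Set B) → I = ⊥ ∨ I = ⊤)
    (hcenter : ∃ z : B, z ≠ 0 ∧ ∀ b : B, z * b = b * z) :
    ∃ e : B, ∀ b : B, e * b = b ∧ b * e = b := by
  obtain ⟨z, hz0, hzc⟩ := hcenter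
  have hstar_zc : ∀ b, Commute (star z) b := fun b ↦ by
    simpa using Commute.star_star (hzc (star b))
  have hwc : ∀ b, Commute (star z * z) b := fun b ↦ (hstar_zc b).mul_left (hzc b)
  have hw0 : star z * z ≠ 0 := by rwa [ne_eq, CStarRing.star_mul_self_eq_zero_iff]
  obtain ⟨t, ht0, hsq⟩ := exists_mul_self_eq_smul_of_central hsimple (.star_mul_self z) hwc hw0
  set e := t⁻¹ • (star z * z)
  have hec : ∀ b, Commute e b := fun b ↦ (hwc b).smul_left t⁻¹
  have he : IsIdempotentElem e := by
    rw [IsIdempotentElem, smul_mul_smul_comm, hsq, smul_smul, mul_assoc, inv_mul_cancel₀ ht0,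
      mul_one]
  have hcancel : ∀ x, e * x = 0 → x = 0 := fun x ↦
    eq_zero_of_central_mul_eq_zero hsimple hec (smul_ne_zero (inv_ne_zero ht0) hw0)
  have hleft := he.mul_left_eq_self hcancel
  exact ⟨e, fun b ↦ ⟨hleft b, (hec b).eq ▸ hleft b⟩⟩

/-- A simple C*-algebra with nonzero center is unital. -/
theorem simple_with_nonzero_center_unital
    {B : Type*} [NonUnitalCStarAlgebra B] [Nontrivial B]
    (hsimple : ∀ I : TwoSidedIdeal B, IsClosed (I : Set B) → I = ⊥ ∨ I = ⊤)
    (hcenter : ∃ z : B, z ≠ 0 ∧ ∀ b : B, z * b = b * z) :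
    ∃ e : B, ∀ b : B, e * b = b ∧ b * e = b :=
  simple_with_nonzero_center_unital_general hsimple hcenter
end

section
/- Let B be a separable, simple, non-unital C*-algebra. Then there exists a sequence (e_n) of positive contractions in B which is a strictly increasing approximate identity of B satisfying e_n·e_{n+1} = e_n and ‖e_{n+1} − e_n‖ = 1 for all n; that is: 0 ≤ e_n ≤ e_{n+1} ≤ 1 with e_n ≠ e_{n+1}, e_n e_{n+1} = e_n, ‖e_{n+1} − e_n‖ = 1 for every n, and ‖e_n b − b‖ → 0 and ‖b e_n − b‖ → 0 for every b ∈ B. -/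
/-!
Separability yields a strictly positive element: for a dense sequence `bⱼ`, the element
`h = ∑ wⱼ • star bⱼ * bⱼ` with small weights has `B * h` dense, because
`‖z - z * h (c + h)⁻¹‖² ≤ r c / 4` whenever `star z * z ≤ r • h`. If the positive part of the
spectrum of `h` stayed away from `0`, a function of `h` would be a unit of `B`; hence there are
`tₙ ∈ σ(h)` strictly decreasing to `0`. Then `eₙ = fₙ(h)`, where `fₙ` ramps from `0` at `tₙ₊₁`
to `1` at `tₙ`, works: `fₙ fₙ₊₁ = fₙ`, `fₙ₊₁ - fₙ` takes the value `1` at `tₙ₊₁ ∈ σ(h)`, and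
`‖h eₙ - h‖ ≤ tₙ` together with the density of `B * h` gives the approximate identity.
-/

open Filter Topology Set Unitization NNReal

lemma mul_eq_self_of_denseRange_mul_right {R : Type*} [NonUnitalSemiring R] [TopologicalSpace R]
    [ContinuousMul R] [T2Space R] {h p : R} (hdense : DenseRange (· * h)) (hp : h * p = h) (b : R) :
    b * p = b :=
  hdense.induction_on b (isClosed_eq (continuous_id.mul continuous_const) continuous_id)
    fun x => by rw [mul_assoc, hp]

lemma tendsto_mul_right_of_denseRange {R : Type*} [NonUnitalSeminormedRing R] {ι : Type*}
    {l : Filter ι} {e : ι → R} {h : R} {C : ℝ≥0} (he : ∀ i, ‖e i‖ ≤ C)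
    (hdense : DenseRange (· * h)) (hlim : Tendsto (h * e ·) l (𝓝 h)) (b : R) :
    Tendsto (b * e ·) l (𝓝 b) := by
  have hequi : Equicontinuous fun i (x : R) => x * e i :=
    (LipschitzWith.uniformEquicontinuous _ C fun i => lipschitzWith_iff_norm_sub_le.mpr
      fun x y => by
        rw [← sub_mul, mul_comm (C : ℝ)]
        exact (norm_mul_le _ _).trans (by gcongr; exact he i)).equicontinuous
  refine hdense.induction_on (p := fun b => Tendsto (b * e ·) l (𝓝 b)) b
    (hequi.isClosed_setOfPred_tendsto continuous_id) fun x => ?_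
  simpa only [mul_assoc] using tendsto_const_nhds.mul hlim

noncomputable def ramp (a b s : ℝ) : ℝ := max 0 (min 1 ((s - a) / (b - a)))

section Ramp

variable {a b c s : ℝ}

@[fun_prop]
lemma continuous_ramp : Continuous (ramp a b) := by
  unfold ramp; fun_prop

lemma ramp_nonneg : 0 ≤ ramp a b s := le_max_left _ _

lemma ramp_le_one : ramp a b s ≤ 1 := max_le zero_le_one (min_le_left _ _)

lemma ramp_eq_zero_of_le (hab : a ≤ b) (hs : s ≤ a) : ramp a b s = 0 :=
  max_eq_left <| (min_le_right _ _).trans <|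
    div_nonpos_of_nonpos_of_nonneg (by linarith) (by linarith)

lemma ramp_eq_one_of_le (hab : a < b) (hs : b ≤ s) : ramp a b s = 1 := by
  rw [ramp, min_eq_left ((one_le_div (by linarith)).mpr (by linarith)), max_eq_right zero_le_one]

lemma ramp_eq_zero_or_ramp_eq_one (hca : c < a) (hab : a ≤ b) (s : ℝ) :
    ramp a b s = 0 ∨ ramp c a s = 1 := by
  rcases le_total s a with hs | hs
  · exact .inl (ramp_eq_zero_of_le hab hs)
  · exact .inr (ramp_eq_one_of_le hca hs)

lemma ramp_apply_zero_of_strictAnti {t : ℕ → ℝ} (ht : StrictAnti t) (htpos : ∀ n, 0 < t n)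
    (n : ℕ) : ramp (t (n + 1)) (t n) 0 = 0 :=
  ramp_eq_zero_of_le (ht n.lt_succ_self).le (htpos _).le

end Ramp

section CStarAlgebra

variable {A : Type*} [NonUnitalCStarAlgebra A]

section StarOrderedRing

variable [PartialOrder A] [StarOrderedRing A]

lemma norm_mul_sq_le_of_star_mul_self_le {z d : A} (hzd : star z * z ≤ d) (w : A) :
    ‖z * w‖ ^ 2 ≤ ‖star w * d * w‖ := by
  rw [sq, ← CStarRing.norm_star_mul_self, star_mul, mul_assoc, ← mul_assoc (star z),
    ← mul_assoc]
  exact CStarAlgebra.norm_le_norm_of_nonneg_of_le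
    (star_left_conjugate_nonneg (star_mul_self_nonneg z) w) (star_left_conjugate_le_conjugate hzd w)

lemma norm_sub_mul_cfcₙ_div_add_sq_le {z d : A} {r c : ℝ} (hd : 0 ≤ d) (hr : 0 ≤ r)
    (hc : 0 < c) (hzd : star z * z ≤ r • d) :
    ‖z - z * cfcₙ (fun s : ℝ => s / (c + s)) d‖ ^ 2 ≤ r * c / 4 := by
  set D : Unitization ℂ A := (d : Unitization ℂ A)
  have hD : 0 ≤ D := inr_nonneg_iff.mpr hd
  have hσ : ∀ s ∈ spectrum ℝ D, 0 ≤ s := spectrum_nonneg_of_nonneg hD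
  have hk : ContinuousOn (fun s : ℝ => c / (c + s)) (spectrum ℝ D) :=
    continuousOn_const.div (by fun_prop) fun s hs => by linarith [hσ s hs]
  set W := cfc (fun s : ℝ => c / (c + s)) D
  have hW : (↑(z - z * cfcₙ (fun s : ℝ => s / (c + s)) d) : Unitization ℂ A) = z * W := by
    have hg : ContinuousOn (fun s : ℝ => s / (c + s)) (spectrum ℝ D) :=
      continuousOn_id.div (by fun_prop) fun s hs => by linarith [hσ s hs]
    have : W = 1 - cfc (fun s : ℝ => s / (c + s)) D := by
      rw [← cfc_const_one ℝ D, ← cfc_sub _ _ D continuousOn_const hg]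
      refine cfc_congr fun s hs => ?_
      field_simp [show c + s ≠ 0 by linarith [hσ s hs]]
      ring
    rw [inr_sub ℂ, inr_mul ℂ, real_cfcₙ_eq_cfc_inr d _ (by simp), this, mul_sub, mul_one]
  have hzD : star (z : Unitization ℂ A) * z ≤ r • D := by
    rwa [← inr_star, ← inr_mul, ← inr_smul ℂ, inr_le_iff _ _ (.of_nonneg (star_mul_self_nonneg z))
      (.of_nonneg (smul_nonneg hr hd))]
  have hWD : star W * (r • D) * W = cfc (fun s : ℝ => c / (c + s) * (r * s) * (c / (c + s))) D := by
    rw [cfc_mul (fun s => c / (c + s) * (r * s)) _ D (hk.mul (by fun_prop)) hk,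
      cfc_mul _ (fun s => r * s) D hk (by fun_prop), cfc_const_mul r (fun s => s) D,
      cfc_id' ℝ D, (cfc_predicate _ D : IsSelfAdjoint W).star_eq, mul_smul_comm, smul_mul_assoc]
  rw [← norm_inr (𝕜 := ℂ), hW]
  refine (norm_mul_sq_le_of_star_mul_self_le hzD W).trans ?_
  rw [hWD]
  refine norm_cfc_le (by positivity) fun s hs => ?_
  have hs := hσ s hs
  have hcs : 0 < c + s := by linarith
  have hquarter : c * s / (c + s) ^ 2 ≤ 1 / 4 := by
    rw [div_le_iff₀ (by positivity)]
    nlinarith [sq_nonneg (c - s)]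
  calc ‖c / (c + s) * (r * s) * (c / (c + s))‖ = r * c * (c * s / (c + s) ^ 2) := by
        rw [Real.norm_of_nonneg (by positivity)]
        field_simp
    _ ≤ r * c * (1 / 4) := by gcongr
    _ = r * c / 4 := by ring

lemma cfcₙ_div_add_mul_self {d : A} (hd : 0 ≤ d) {c : ℝ} (hc : 0 < c) :
    cfcₙ (fun s : ℝ => s / (c + s)) d * d = d - c • cfcₙ (fun s : ℝ => s / (c + s)) d := by
  have hσ : ∀ s ∈ quasispectrum ℝ d, 0 ≤ s := quasispectrum_nonneg_of_nonneg d hd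
  have hg : ContinuousOn (fun s : ℝ => s / (c + s)) (quasispectrum ℝ d) :=
    continuousOn_id.div (by fun_prop) fun s hs => by linarith [hσ s hs]
  rw [eq_sub_iff_add_eq]
  calc cfcₙ (fun s : ℝ => s / (c + s)) d * d + c • cfcₙ (fun s : ℝ => s / (c + s)) d
      = cfcₙ (fun s : ℝ => s / (c + s) * s + c * (s / (c + s))) d := by
        rw [cfcₙ_add _ _ d, cfcₙ_mul _ _ d, cfcₙ_const_mul c _ d, cfcₙ_id' ℝ d]
    _ = cfcₙ (fun s : ℝ => s) d := cfcₙ_congr fun s hs => by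
        field_simp [show c + s ≠ 0 by linarith [hσ s hs]]
        ring
    _ = d := cfcₙ_id' ℝ d

lemma mem_closure_range_mul_right_of_star_mul_self_le {z d : A} {r : ℝ} (hd : 0 ≤ d)
    (hr : 0 ≤ r) (hzd : star z * z ≤ r • d) : z ∈ closure (range (· * d)) := by
  refine Metric.mem_closure_iff.mpr fun ε hε => ?_
  set c := ε ^ 2 / (r + 1)
  have hc : 0 < c := by positivity
  have he := cfcₙ_div_add_mul_self hd hc
  set e := cfcₙ (fun s : ℝ => s / (c + s)) d
  -- `he` exhibits `z * e = z * d (c + d)⁻¹` as a right multiple of `d` inside `A` itself.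
  refine ⟨z * e, ⟨c⁻¹ • (z - z * e), ?_⟩, ?_⟩
  · simp only [smul_mul_assoc, sub_mul, mul_assoc, he, mul_sub, mul_smul_comm, sub_sub_cancel,
      smul_smul, inv_mul_cancel₀ hc.ne', one_smul]
  · have hsq : ‖z - z * e‖ ^ 2 < ε ^ 2 :=
      calc ‖z - z * e‖ ^ 2 ≤ r * c / 4 := norm_sub_mul_cfcₙ_div_add_sq_le hd hr hc hzd
        _ < ε ^ 2 := by
          rw [div_lt_iff₀ (by norm_num), mul_div_assoc', div_lt_iff₀ (by positivity)]
          nlinarith [pow_pos hε 2]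
    rw [dist_eq_norm]
    exact lt_of_pow_lt_pow_left₀ 2 hε.le hsq

lemma exists_nonneg_forall_le_smul (x : ℕ → A) (hx : ∀ j, 0 ≤ x j) :
    ∃ h : A, 0 ≤ h ∧ ∀ j, x j ≤ (2 ^ j * (1 + ‖x j‖)) • h := by
  set w : ℕ → ℝ := fun j => 2 ^ j * (1 + ‖x j‖)
  have hw : ∀ j, 0 < w j := fun j => by positivity
  have hsummable : Summable fun j => (w j)⁻¹ • x j := by
    refine .of_norm_bounded summable_geometric_two fun j => ?_
    rw [norm_smul, Real.norm_of_nonneg (inv_nonneg.mpr (hw j).le), inv_mul_le_iff₀ (hw j)]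
    calc ‖x j‖ ≤ 1 + ‖x j‖ := le_add_of_nonneg_left zero_le_one
      _ = w j * (1 / 2) ^ j := by simp only [w, one_div, inv_pow]; field_simp
  have hterm : ∀ j, 0 ≤ (w j)⁻¹ • x j := fun j => smul_nonneg (inv_nonneg.mpr (hw j).le) (hx j)
  refine ⟨∑' j, (w j)⁻¹ • x j, tsum_nonneg hterm, fun j => ?_⟩
  calc x j = w j • (w j)⁻¹ • x j := (smul_inv_smul₀ (hw j).ne' _).symm
    _ ≤ w j • ∑' j, (w j)⁻¹ • x j :=
      smul_le_smul_of_nonneg_left (hsummable.le_tsum j fun i _ => hterm i) (hw j).le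

theorem exists_nonneg_denseRange_mul_right [TopologicalSpace.SeparableSpace A] :
    ∃ h : A, 0 ≤ h ∧ DenseRange (· * h) := by
  obtain ⟨b, hb⟩ := TopologicalSpace.exists_dense_seq A
  obtain ⟨h, hh, hle⟩ := exists_nonneg_forall_le_smul _ fun j => star_mul_self_nonneg (b j)
  refine ⟨h, hh, dense_closure.mp (hb.mono (range_subset_iff.mpr fun j => ?_))⟩
  exact mem_closure_range_mul_right_of_star_mul_self_le hh (by positivity) (hle j)

lemma isGLB_quasispectrum_inter_Ioi_zero {h : A} (hh : 0 ≤ h) (hdense : DenseRange (· * h))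
    (hnonunital : ¬ ∃ e : A, ∀ b : A, e * b = b ∧ b * e = b) :
    IsGLB (quasispectrum ℝ h ∩ Ioi 0) 0 := by
  refine ⟨fun s hs => hs.2.le, fun δ hδ => ?_⟩
  by_contra! hδpos
  have hσ : ∀ s ∈ quasispectrum ℝ h, 0 ≤ s := quasispectrum_nonneg_of_nonneg h hh
  set p := cfcₙ (fun s : ℝ => min 1 (s / δ)) h
  have hp : h * p = h :=
    calc h * p = cfcₙ (fun s : ℝ => s * min 1 (s / δ)) h := by rw [cfcₙ_mul _ _ h, cfcₙ_id' ℝ h]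
      _ = cfcₙ (fun s : ℝ => s) h := cfcₙ_congr fun s hs => by
        rcases (hσ s hs).eq_or_lt with rfl | hs0
        · simp
        · rw [min_eq_left ((one_le_div hδpos).mpr (hδ ⟨hs, hs0⟩)), mul_one]
      _ = h := cfcₙ_id' ℝ h
  have hright := mul_eq_self_of_denseRange_mul_right hdense hp
  have hpsa : IsSelfAdjoint p := cfcₙ_predicate _ h
  refine hnonunital ⟨p, fun b => ⟨?_, hright b⟩⟩
  simpa [hpsa.star_eq] using congrArg star (hright (star b))

end StarOrderedRing

noncomputable def rampSeq (h : A) (t : ℕ → ℝ) (n : ℕ) : A := cfcₙ (ramp (t (n + 1)) (t n)) h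

section RampSeq

variable {h : A} {t : ℕ → ℝ}

lemma norm_rampSeq_le_one (n : ℕ) : ‖rampSeq h t n‖ ≤ 1 :=
  norm_cfcₙ_le fun _ _ => by rw [Real.norm_of_nonneg ramp_nonneg]; exact ramp_le_one

lemma rampSeq_mul_succ (ht : StrictAnti t) (htpos : ∀ n, 0 < t n) (n : ℕ) :
    rampSeq h t n * rampSeq h t (n + 1) = rampSeq h t n := by
  rw [rampSeq, rampSeq, ← cfcₙ_mul _ _ h (hf0 := ramp_apply_zero_of_strictAnti ht htpos n)
    (hg0 := ramp_apply_zero_of_strictAnti ht htpos (n + 1))]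
  refine cfcₙ_congr fun s _ => ?_
  rcases ramp_eq_zero_or_ramp_eq_one (ht (n + 1).lt_succ_self) (ht n.lt_succ_self).le s with
    hs | hs
  · rw [hs, zero_mul]
  · rw [hs, mul_one]

lemma norm_rampSeq_succ_sub (hh : IsSelfAdjoint h) (ht : StrictAnti t) (htpos : ∀ n, 0 < t n)
    {n : ℕ} (hσ : t (n + 1) ∈ quasispectrum ℝ h) :
    ‖rampSeq h t (n + 1) - rampSeq h t n‖ = 1 := by
  rw [rampSeq, rampSeq, ← cfcₙ_sub _ _ h (hf0 := ramp_apply_zero_of_strictAnti ht htpos (n + 1))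
    (hg0 := ramp_apply_zero_of_strictAnti ht htpos n)]
  refine le_antisymm (norm_cfcₙ_le fun s _ => ?_) ?_
  · exact abs_sub_le_of_nonneg_of_le ramp_nonneg ramp_le_one ramp_nonneg ramp_le_one
  · have := norm_apply_le_norm_cfcₙ
      (fun s => ramp (t (n + 1 + 1)) (t (n + 1)) s - ramp (t (n + 1)) (t n) s) h hσ
      (hf₀ := by rw [ramp_apply_zero_of_strictAnti ht htpos, ramp_apply_zero_of_strictAnti ht htpos,
        sub_zero])
    rwa [ramp_eq_one_of_le (ht (n + 1).lt_succ_self) le_rfl,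
      ramp_eq_zero_of_le (ht n.lt_succ_self).le le_rfl, sub_zero, norm_one] at this

lemma rampSeq_nonneg [PartialOrder A] [StarOrderedRing A] (n : ℕ) : 0 ≤ rampSeq h t n :=
  cfcₙ_nonneg fun _ _ => ramp_nonneg

lemma rampSeq_le_succ [PartialOrder A] [StarOrderedRing A] (ht : StrictAnti t)
    (htpos : ∀ n, 0 < t n) (n : ℕ) :
    rampSeq h t n ≤ rampSeq h t (n + 1) := by
  refine cfcₙ_mono (fun s _ => ?_) (hf0 := ramp_apply_zero_of_strictAnti ht htpos n)
    (hg0 := ramp_apply_zero_of_strictAnti ht htpos (n + 1))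
  rcases ramp_eq_zero_or_ramp_eq_one (ht (n + 1).lt_succ_self) (ht n.lt_succ_self).le s with
    hs | hs
  · rw [hs]; exact ramp_nonneg
  · rw [hs]; exact ramp_le_one

lemma norm_mul_rampSeq_sub_le [PartialOrder A] [StarOrderedRing A] (hh : 0 ≤ h)
    (ht : StrictAnti t) (htpos : ∀ n, 0 < t n) (n : ℕ) : ‖h * rampSeq h t n - h‖ ≤ t n := by
  have hσ : ∀ s ∈ quasispectrum ℝ h, 0 ≤ s := quasispectrum_nonneg_of_nonneg h hh
  have hcfc : h * rampSeq h t n - h = cfcₙ (fun s => s * ramp (t (n + 1)) (t n) s - s) h := by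
    rw [cfcₙ_sub _ _ h (hf0 := by simp),
      cfcₙ_mul _ _ h (hg0 := ramp_apply_zero_of_strictAnti ht htpos n), cfcₙ_id' ℝ h, rampSeq]
  rw [hcfc]
  refine norm_cfcₙ_le fun s hs => ?_
  rcases lt_or_ge s (t n) with hst | hst
  · have hs0 := hσ s hs
    calc ‖s * ramp (t (n + 1)) (t n) s - s‖ = s * (1 - ramp (t (n + 1)) (t n) s) := by
          rw [Real.norm_eq_abs, abs_sub_comm, ← mul_one_sub,
            abs_of_nonneg (mul_nonneg hs0 (sub_nonneg.mpr ramp_le_one))]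
      _ ≤ s := mul_le_of_le_one_right hs0 (sub_le_self _ ramp_nonneg)
      _ ≤ t n := hst.le
  · rw [ramp_eq_one_of_le (ht n.lt_succ_self) hst, mul_one, sub_self, norm_zero]
    exact (htpos n).le

end RampSeq

end CStarAlgebra

theorem exists_special_approximate_identity_general
    {B : Type*} [NonUnitalCStarAlgebra B] [PartialOrder B] [StarOrderedRing B]
    [TopologicalSpace.SeparableSpace B]
    (hnonunital : ¬ ∃ e : B, ∀ b : B, e * b = b ∧ b * e = b) :
    ∃ e : ℕ → B,
      (∀ n, 0 ≤ e n) ∧ (∀ n, ‖e n‖ ≤ 1) ∧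
      (∀ n, e n ≤ e (n + 1)) ∧ (∀ n, e n ≠ e (n + 1)) ∧
      (∀ n, e n * e (n + 1) = e n) ∧ (∀ n, ‖e (n + 1) - e n‖ = 1) ∧
      (∀ b : B, Tendsto (fun n => ‖e n * b - b‖) atTop (𝓝 0) ∧
        Tendsto (fun n => ‖b * e n - b‖) atTop (𝓝 0)) := by
  obtain ⟨h, hh, hdense⟩ := exists_nonneg_denseRange_mul_right (A := B)
  have hglb := isGLB_quasispectrum_inter_Ioi_zero hh hdense hnonunital
  obtain ⟨t, ht, htpos, htlim, htσ⟩ :=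
    hglb.exists_seq_strictAnti_tendsto_of_notMem (fun h0 => (mem_Ioi.mp h0.2).false) hglb.nonempty
  have hnorm (n : ℕ) := norm_rampSeq_succ_sub hh.isSelfAdjoint ht htpos (htσ (n + 1)).1
  have hright (b : B) : Tendsto (b * rampSeq h t ·) atTop (𝓝 b) :=
    tendsto_mul_right_of_denseRange (C := 1) (by simpa using norm_rampSeq_le_one) hdense
      (tendsto_iff_norm_sub_tendsto_zero.mpr <| squeeze_zero (fun _ => norm_nonneg _)
        (norm_mul_rampSeq_sub_le hh ht htpos) htlim) b
  have hleft (b : B) : Tendsto (rampSeq h t · * b) atTop (𝓝 b) := by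
    have hsa (n : ℕ) : star (rampSeq h t n) = rampSeq h t n :=
      (rampSeq_nonneg n).isSelfAdjoint.star_eq
    simpa [Function.comp_def, hsa] using
      (continuous_star.tendsto _).comp (hright (star b))
  refine ⟨rampSeq h t, rampSeq_nonneg, norm_rampSeq_le_one, rampSeq_le_succ ht htpos,
    fun n hn => ?_, rampSeq_mul_succ ht htpos, hnorm, fun b => ⟨?_, ?_⟩⟩
  · simpa [hn] using hnorm n
  · exact tendsto_iff_norm_sub_tendsto_zero.mp (hleft b)
  · exact tendsto_iff_norm_sub_tendsto_zero.mp (hright b)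

/-- Every separable, simple, non-unital C*-algebra `B` admits a strictly increasing sequential
approximate identity `(e n)` of positive contractions with `e n * e (n+1) = e n` and
`‖e (n+1) - e n‖ = 1` for all `n`. -/
theorem exists_special_approximate_identity
    {B : Type*} [NonUnitalCStarAlgebra B] [PartialOrder B] [StarOrderedRing B]
    [Nontrivial B] [TopologicalSpace.SeparableSpace B]
    (hsimple : ∀ I : TwoSidedIdeal B, IsClosed (I : Set B) → I = ⊥ ∨ I = ⊤)
    (hnonunital : ¬ ∃ e : B, ∀ b : B, e * b = b ∧ b * e = b) :
    ∃ e : ℕ → B,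
      (∀ n, 0 ≤ e n) ∧ (∀ n, ‖e n‖ ≤ 1) ∧
      (∀ n, e n ≤ e (n + 1)) ∧ (∀ n, e n ≠ e (n + 1)) ∧
      (∀ n, e n * e (n + 1) = e n) ∧ (∀ n, ‖e (n + 1) - e n‖ = 1) ∧
      (∀ b : B, Tendsto (fun n => ‖e n * b - b‖) atTop (𝓝 0) ∧
        Tendsto (fun n => ‖b * e n - b‖) atTop (𝓝 0)) :=
  exists_special_approximate_identity_general hnonunital
end
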